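/- arXiv:1401.6617 — 3 statements merged into one kernel-verified Lean document; each statement's English description precedes it below -/
import Mathlib

section
/- Suppose $T$ is a sublinear operator mapping measurable functions on $\mathbb{R}^n$ to nonnegative measurable functions such that: (i) $T$ is of weak type $(1,1)$ with respect to a weight $w \in A_1$, i.e., $\lambda \cdot w(\{x : Tf(x) > \lambda\}) \le C \int |f| w$ for all $\lambda > 0$; (ii) for every ball $B$, every $f$ supported outside $2B$, and every $x \in B$, $Tf(x) \le C \sum_{\ell=1}^\infty \frac{1}{|2^{\ell+1}B|}\int_{2^{\ell+1}B} |f(z)|\,dz$. Then for every $0 < \kappa < 1$ there is $C' > 0$ such that for all balls $B$ and $\lambda > 0$: $\lambda \cdot w(\{x \in B : Tf(x) > \lambda\}) \le C' w(B)^\kappa \|f\|_{L^{1,\kappa}(w)}$. -/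
/-!
Split `f = f·1_{2B} + f·1_{(2B)ᶜ}`. The local part is controlled by the weak `(1,1)` bound, the
Morrey bound on `2B` and doubling. On `B`, the size condition bounds `T` of the far part by a sum
of averages of `|f|` over the balls `2^{ℓ+2}B`. By the `A₁` condition each such average is at most
`C₁ ‖f‖ w(2^{ℓ+2}B)^{κ-1}`, and the `A∞` comparison gives `w(2^k B) ≥ Cc⁻¹ 2^{k n δ} w(B)`; since
`κ < 1` these terms decay geometrically. So `T` of the far part is pointwise `≲ ‖f‖ w(B)^{κ-1}`
on `B`: its superlevel set in `B` at height `λ/2` is empty unless `λ ≲ ‖f‖ w(B)^{κ-1}`, so its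
weight is `≲ ‖f‖ w(B)^κ / λ`.
-/

open MeasureTheory Metric ENNReal Module

section Measure

variable {α : Type*} [MeasurableSpace α] {μ : Measure α}

lemma two_mul_mul_setLIntegral_superlevel_le {g g₁ g₂ : α → ℝ≥0∞}
    (hg : ∀ x, g x ≤ g₁ x + g₂ x) (φ : α → ℝ≥0∞) (s : Set α) (b : ℝ≥0∞) :
    2 * b * ∫⁻ x in s ∩ {x | 2 * b < g x}, φ x ∂μ ≤
      2 * (b * ∫⁻ x in {x | b < g₁ x}, φ x ∂μ + b * ∫⁻ x in s ∩ {x | b < g₂ x}, φ x ∂μ) := by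
  have hsub : s ∩ {x | 2 * b < g x} ⊆ {x | b < g₁ x} ∪ (s ∩ {x | b < g₂ x}) := by
    rintro x ⟨hs, hx⟩
    by_contra h
    simp only [Set.mem_union, Set.mem_inter_iff, Set.mem_ofPred_eq, not_or, not_and, not_lt] at h hx
    exact (hx.trans_le (hg x)).not_ge (two_mul b ▸ add_le_add h.1 (h.2 hs))
  calc 2 * b * ∫⁻ x in s ∩ {x | 2 * b < g x}, φ x ∂μ
      ≤ 2 * b * (∫⁻ x in {x | b < g₁ x}, φ x ∂μ + ∫⁻ x in s ∩ {x | b < g₂ x}, φ x ∂μ) := by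
        gcongr
        exact (lintegral_mono_set hsub).trans (lintegral_union_le _ _ _)
    _ = _ := by ring

lemma mul_setLIntegral_inter_superlevel_le {g φ : α → ℝ≥0∞} {s : Set α} {c : ℝ≥0∞}
    (hg : ∀ x ∈ s, g x ≤ c) (b : ℝ≥0∞) :
    b * ∫⁻ x in s ∩ {x | b < g x}, φ x ∂μ ≤ c * ∫⁻ x in s, φ x ∂μ := by
  rcases (s ∩ {x | b < g x}).eq_empty_or_nonempty with h | ⟨x, hxs, hx⟩
  · simp [h]
  · exact mul_le_mul' ((show b < g x from hx).le.trans (hg x hxs))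
      (lintegral_mono_set Set.inter_subset_left)

lemma lintegral_le_ofReal_inv_mul_lintegral_mul {w : α → ℝ} {m : ℝ} (hm : 0 < m)
    (hw : ∀ᵐ x ∂μ, m ≤ w x) (g : α → ℝ≥0∞) :
    ∫⁻ x, g x ∂μ ≤ ENNReal.ofReal m⁻¹ * ∫⁻ x, g x * ENNReal.ofReal (w x) ∂μ := by
  rw [← lintegral_const_mul' _ _ ofReal_ne_top]
  refine lintegral_mono_ae (hw.mono fun x hx => ?_)
  calc g x = ENNReal.ofReal (m⁻¹ * m) * g x := by
        rw [inv_mul_cancel₀ hm.ne', ofReal_one, one_mul]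
    _ ≤ ENNReal.ofReal (m⁻¹ * w x) * g x := by gcongr
    _ = _ := by rw [ofReal_mul (inv_nonneg.2 hm.le)]; ring

lemma inv_measure_mul_setLIntegral_le_of_average_le_essInf {S : Set α} (hS : μ S ≠ ∞)
    {w : α → ℝ} (hw0 : ∀ x, 0 ≤ w x) (hwS : 0 < ∫ x in S, w x ∂μ) {C₁ : ℝ} (hC₁ : 0 < C₁)
    (hA1 : (μ S).toReal⁻¹ * ∫ x in S, w x ∂μ ≤ C₁ * essInf w (μ.restrict S)) (g : α → ℝ≥0∞) :
    (μ S)⁻¹ * ∫⁻ x in S, g x ∂μ ≤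
      ENNReal.ofReal (C₁ / ∫ x in S, w x ∂μ) * ∫⁻ x in S, g x * ENNReal.ofReal (w x) ∂μ := by
  set W := ∫ x in S, w x ∂μ
  set m := essInf w (μ.restrict S)
  have hS0 : μ S ≠ 0 := fun h => hwS.ne' (by simp [W, Measure.restrict_eq_zero.2 h])
  have hV : 0 < (μ S).toReal := toReal_pos hS0 hS
  have hm : 0 < m :=
    pos_of_mul_pos_right ((by positivity : 0 < (μ S).toReal⁻¹ * W).trans_le hA1) hC₁.le
  have hae : ∀ᵐ x ∂μ.restrict S, m ≤ w x := ae_essInf_le (Filter.isBoundedUnder_of ⟨0, hw0⟩)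
  calc (μ S)⁻¹ * ∫⁻ x in S, g x ∂μ
      ≤ ENNReal.ofReal (μ S).toReal⁻¹ *
          (ENNReal.ofReal m⁻¹ * ∫⁻ x in S, g x * ENNReal.ofReal (w x) ∂μ) := by
        rw [ofReal_inv_of_pos hV, ofReal_toReal hS]
        gcongr
        exact lintegral_le_ofReal_inv_mul_lintegral_mul hm hae g
    _ ≤ _ := by
        rw [← mul_assoc, ← ofReal_mul (by positivity)]
        gcongr
        rw [le_div_iff₀ hwS]
        calc (μ S).toReal⁻¹ * m⁻¹ * W = ((μ S).toReal⁻¹ * W) * m⁻¹ := by ring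
          _ ≤ C₁ * m * m⁻¹ := by gcongr
          _ = C₁ := by field_simp

end Measure

section Weights

variable {X : Type*} [PseudoMetricSpace X] [MeasurableSpace X]

def SatisfiesA1 (μ : Measure X) (w : X → ℝ) (C : ℝ) : Prop :=
  ∀ x₀ r, 0 < r → (μ (ball x₀ r)).toReal⁻¹ * ∫ x in ball x₀ r, w x ∂μ ≤
    C * essInf w (μ.restrict (ball x₀ r))

def SatisfiesAInfty (μ : Measure X) (w : X → ℝ) (C δ : ℝ) : Prop :=
  ∀ x₀ r, 0 < r → ∀ F : Set X, MeasurableSet F → F ⊆ ball x₀ r →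
    ∫ x in F, w x ∂μ ≤ C * ((μ F).toReal / (μ (ball x₀ r)).toReal) ^ δ * ∫ x in ball x₀ r, w x ∂μ

/-- `‖f‖_{L^{1,κ}(w)} ≤ M`, with both sides multiplied by `w(B)^κ`. -/
def MorreyNormLE (μ : Measure X) (w : X → ℝ) (κ : ℝ) (f : X → ℝ) (M : ℝ) : Prop :=
  ∀ x₀ r, 0 < r → ∫⁻ x in ball x₀ r, ENNReal.ofReal |f x| * ENNReal.ofReal (w x) ∂μ ≤
    ENNReal.ofReal M * ENNReal.ofReal ((∫ x in ball x₀ r, w x ∂μ) ^ κ)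

variable [OpensMeasurableSpace X] {μ : Measure X}

lemma mul_setLIntegral_superlevel_indicator_ball_le {T : (X → ℝ) → X → ℝ≥0∞} {w f : X → ℝ}
    {A Cd κ M : ℝ}
    (hweak : ∀ f, Measurable f → ∀ lam : ℝ, 0 < lam →
      ENNReal.ofReal lam * ∫⁻ x in {x | ENNReal.ofReal lam < T f x}, ENNReal.ofReal (w x) ∂μ
        ≤ ENNReal.ofReal A * ∫⁻ x, ENNReal.ofReal |f x| * ENNReal.ofReal (w x) ∂μ)
    (hA : 0 ≤ A) (hw0 : ∀ x, 0 ≤ w x) (hCd : 0 ≤ Cd) (hκ0 : 0 ≤ κ) (hM : 0 ≤ M)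
    (hf : Measurable f) (hfM : MorreyNormLE μ w κ f M) {x₀ : X} {r : ℝ} (hr : 0 < r)
    (hdouble : ∫ x in ball x₀ (2 * r), w x ∂μ ≤ Cd * ∫ x in ball x₀ r, w x ∂μ)
    {lam : ℝ} (hlam : 0 < lam) :
    ENNReal.ofReal lam *
        ∫⁻ x in {x | ENNReal.ofReal lam < T ((ball x₀ (2 * r)).indicator f) x},
          ENNReal.ofReal (w x) ∂μ
      ≤ ENNReal.ofReal (A * Cd ^ κ * M * (∫ x in ball x₀ r, w x ∂μ) ^ κ) := by
  have hW : 0 ≤ ∫ x in ball x₀ r, w x ∂μ := integral_nonneg fun x => hw0 x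
  calc _ ≤ ENNReal.ofReal A *
          ∫⁻ x, ENNReal.ofReal |(ball x₀ (2 * r)).indicator f x| * ENNReal.ofReal (w x) ∂μ :=
        hweak _ (hf.indicator measurableSet_ball) lam hlam
    _ = ENNReal.ofReal A *
          ∫⁻ x in ball x₀ (2 * r), ENNReal.ofReal |f x| * ENNReal.ofReal (w x) ∂μ := by
        rw [← lintegral_indicator measurableSet_ball]
        refine congrArg _ (lintegral_congr fun x => ?_)
        by_cases hx : x ∈ ball x₀ (2 * r) <;> simp [hx]
    _ ≤ ENNReal.ofReal A *
          (ENNReal.ofReal M * ENNReal.ofReal ((∫ x in ball x₀ (2 * r), w x ∂μ) ^ κ)) := by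
        gcongr
        exact hfM x₀ _ (by positivity)
    _ ≤ ENNReal.ofReal A * (ENNReal.ofReal M *
          ENNReal.ofReal ((Cd * ∫ x in ball x₀ r, w x ∂μ) ^ κ)) := by
        gcongr
        exact integral_nonneg fun x => hw0 x
    _ = _ := by
        rw [Real.mul_rpow hCd hW, ← ofReal_mul hM, ← ofReal_mul hA]
        ring_nf

end Weights

lemma two_rpow_finrank_mul_lt_one (E : Type*) [NormedAddCommGroup E] [NormedSpace ℝ E]
    [FiniteDimensional ℝ E] [Nontrivial E] {δ κ : ℝ} (hδ : 0 < δ) (hκ1 : κ < 1) :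
    (2 : ℝ) ^ ((finrank ℝ E : ℝ) * δ * (κ - 1)) < 1 :=
  Real.rpow_lt_one_of_one_lt_of_neg one_lt_two
    (mul_neg_of_pos_of_neg (by have := finrank_pos (R := ℝ) (M := E); positivity) (by linarith))

section AddHaar

variable {E : Type*} [NormedAddCommGroup E] [NormedSpace ℝ E] [MeasurableSpace E] [BorelSpace E]
  [FiniteDimensional ℝ E] {μ : Measure E} [μ.IsAddHaarMeasure]

lemma toReal_measure_ball_div_ball_mul (x : E) {r u : ℝ} (hr : 0 < r) (hu : 0 < u) :
    (μ (ball x r)).toReal / (μ (ball x (u * r))).toReal = (u ^ finrank ℝ E)⁻¹ := by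
  have hpos : 0 < (μ (ball x r)).toReal :=
    toReal_pos (measure_ball_pos μ x hr).ne' measure_ball_lt_top.ne
  rw [Measure.addHaar_ball_mul_of_pos μ x hu, ← Measure.addHaar_ball_center μ x, toReal_mul,
    toReal_ofReal (by positivity)]
  field_simp

lemma inv_mul_rpow_mul_setIntegral_ball_le {w : E → ℝ} {Cc δ : ℝ} (hCc : 0 < Cc)
    (hcmp : SatisfiesAInfty μ w Cc δ) (x₀ : E) {r u : ℝ} (hr : 0 < r) (hu : 1 ≤ u) :
    Cc⁻¹ * u ^ ((finrank ℝ E : ℝ) * δ) * ∫ x in ball x₀ r, w x ∂μ ≤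
      ∫ x in ball x₀ (u * r), w x ∂μ := by
  have hu0 : 0 < u := one_pos.trans_le hu
  have h := hcmp x₀ (u * r) (by positivity) (ball x₀ r) measurableSet_ball
    (ball_subset_ball (le_mul_of_one_le_left hr.le hu))
  rw [toReal_measure_ball_div_ball_mul x₀ hr hu0, ← Real.rpow_natCast,
    Real.inv_rpow (by positivity), ← Real.rpow_mul hu0.le] at h
  calc _ ≤ Cc⁻¹ * u ^ ((finrank ℝ E : ℝ) * δ) *
        (Cc * (u ^ ((finrank ℝ E : ℝ) * δ))⁻¹ * ∫ x in ball x₀ (u * r), w x ∂μ) := by gcongr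
    _ = _ := by field_simp

lemma inv_measure_ball_mul_lintegral_le_of_morrey {w f : E → ℝ} {C₁ Cc δ κ M : ℝ}
    (hw0 : ∀ x, 0 ≤ w x) (hwpos : ∀ x₀ r, 0 < r → 0 < ∫ x in ball x₀ r, w x ∂μ)
    (hC₁ : 0 < C₁) (hA1 : SatisfiesA1 μ w C₁) (hCc : 0 < Cc) (hcmp : SatisfiesAInfty μ w Cc δ)
    (hκ1 : κ ≤ 1) (hM : 0 ≤ M) (hfM : MorreyNormLE μ w κ f M) (x₀ : E) {r u : ℝ} (hr : 0 < r)
    (hu : 1 ≤ u) :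
    (μ (ball x₀ (u * r)))⁻¹ * ∫⁻ x in ball x₀ (u * r), ENNReal.ofReal |f x| ∂μ ≤
      ENNReal.ofReal (C₁ * Cc ^ (1 - κ) * M * (∫ x in ball x₀ r, w x ∂μ) ^ (κ - 1) *
        u ^ ((finrank ℝ E : ℝ) * δ * (κ - 1))) := by
  have hs : 0 < u * r := by nlinarith
  set W := ∫ x in ball x₀ r, w x ∂μ
  set Ws := ∫ x in ball x₀ (u * r), w x ∂μ
  have hW : 0 < W := hwpos x₀ r hr
  have hWs : 0 < Ws := hwpos x₀ _ hs
  have hu0 : 0 < u := one_pos.trans_le hu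
  calc _ ≤ ENNReal.ofReal (C₁ / Ws) *
          ∫⁻ x in ball x₀ (u * r), ENNReal.ofReal |f x| * ENNReal.ofReal (w x) ∂μ :=
        inv_measure_mul_setLIntegral_le_of_average_le_essInf measure_ball_lt_top.ne hw0 hWs hC₁
          (hA1 x₀ _ hs) _
    _ ≤ ENNReal.ofReal (C₁ / Ws) * (ENNReal.ofReal M * ENNReal.ofReal (Ws ^ κ)) := by
        gcongr
        exact hfM x₀ _ hs
    _ = ENNReal.ofReal (C₁ * M * Ws ^ (κ - 1)) := by
        rw [← ofReal_mul hM, ← ofReal_mul (by positivity), Real.rpow_sub_one hWs.ne']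
        ring_nf
    _ ≤ ENNReal.ofReal (C₁ * M * (Cc⁻¹ * u ^ ((finrank ℝ E : ℝ) * δ) * W) ^ (κ - 1)) := by
        refine ofReal_le_ofReal (mul_le_mul_of_nonneg_left ?_ (by positivity))
        exact Real.rpow_le_rpow_of_nonpos (by positivity)
          (inv_mul_rpow_mul_setIntegral_ball_le hCc hcmp x₀ hr hu) (by linarith)
    _ = _ := by
        rw [Real.mul_rpow (by positivity) hW.le, Real.mul_rpow (by positivity) (by positivity),
          Real.inv_rpow hCc.le, ← Real.rpow_neg hCc.le, neg_sub, ← Real.rpow_mul hu0.le]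
        ring_nf

lemma tsum_inv_measure_ball_mul_lintegral_le_of_morrey [Nontrivial E] {w f : E → ℝ}
    {C₁ Cc δ κ M : ℝ} (hw0 : ∀ x, 0 ≤ w x)
    (hwpos : ∀ x₀ r, 0 < r → 0 < ∫ x in ball x₀ r, w x ∂μ) (hC₁ : 0 < C₁)
    (hA1 : SatisfiesA1 μ w C₁) (hCc : 0 < Cc) (hδ : 0 < δ) (hcmp : SatisfiesAInfty μ w Cc δ)
    (hκ1 : κ < 1) (hM : 0 ≤ M) (hfM : MorreyNormLE μ w κ f M) (x₀ : E) {r : ℝ} (hr : 0 < r) :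
    ∑' ℓ : ℕ, (μ (ball x₀ (2 ^ (ℓ + 2) * r)))⁻¹ *
        ∫⁻ x in ball x₀ (2 ^ (ℓ + 2) * r), ENNReal.ofReal |f x| ∂μ ≤
      ENNReal.ofReal (C₁ * Cc ^ (1 - κ) * M * (∫ x in ball x₀ r, w x ∂μ) ^ (κ - 1) *
        (1 - 2 ^ ((finrank ℝ E : ℝ) * δ * (κ - 1)))⁻¹) := by
  set ρ : ℝ := 2 ^ ((finrank ℝ E : ℝ) * δ * (κ - 1))
  have hρ0 : 0 < ρ := by positivity
  have hρ1 : ρ < 1 := two_rpow_finrank_mul_lt_one E hδ hκ1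
  have hW : 0 < ∫ x in ball x₀ r, w x ∂μ := hwpos x₀ r hr
  set c := C₁ * Cc ^ (1 - κ) * M * (∫ x in ball x₀ r, w x ∂μ) ^ (κ - 1)
  have hc : 0 ≤ c := by positivity
  calc _ ≤ ∑' ℓ : ℕ, ENNReal.ofReal (c * ρ ^ ℓ) := ENNReal.tsum_le_tsum fun ℓ => by
        refine (inv_measure_ball_mul_lintegral_le_of_morrey hw0 hwpos hC₁ hA1 hCc hcmp hκ1.le hM
          hfM x₀ hr (one_le_pow₀ one_le_two)).trans (ofReal_le_ofReal ?_)
        rw [← Real.rpow_pow_comm zero_le_two]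
        exact mul_le_mul_of_nonneg_left
          (pow_le_pow_of_le_one hρ0.le hρ1.le (Nat.le_add_right ℓ 2)) hc
    _ = ENNReal.ofReal (c * (1 - ρ)⁻¹) := by
        rw [← ofReal_tsum_of_nonneg (fun ℓ => by positivity)
          ((summable_geometric_of_lt_one hρ0.le hρ1).mul_left c), tsum_mul_left,
          tsum_geometric_of_lt_one hρ0.le hρ1]

lemma mul_setLIntegral_superlevel_indicator_compl_ball_le [Nontrivial E]
    {T : (E → ℝ) → E → ℝ≥0∞} {w f : E → ℝ} {C₁ Cc δ κ M CT : ℝ} (hCT : 0 ≤ CT)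
    (hTloc : ∀ x₀ r, 0 < r → ∀ f : E → ℝ, Measurable f →
      (∀ x ∈ ball x₀ (2 * r), f x = 0) → ∀ x ∈ ball x₀ r,
        T f x ≤ ENNReal.ofReal CT * ∑' ℓ : ℕ, (μ (ball x₀ (2 ^ (ℓ + 2) * r)))⁻¹ *
          ∫⁻ z in ball x₀ (2 ^ (ℓ + 2) * r), ENNReal.ofReal |f z| ∂μ)
    (hw0 : ∀ x, 0 ≤ w x) (hwpos : ∀ x₀ r, 0 < r → 0 < ∫ x in ball x₀ r, w x ∂μ) (hC₁ : 0 < C₁)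
    (hA1 : SatisfiesA1 μ w C₁) (hCc : 0 < Cc) (hδ : 0 < δ) (hcmp : SatisfiesAInfty μ w Cc δ)
    (hκ1 : κ < 1) (hM : 0 ≤ M) (hf : Measurable f) (hfM : MorreyNormLE μ w κ f M) (x₀ : E)
    {r : ℝ} (hr : 0 < r) (b : ℝ≥0∞) :
    b * ∫⁻ x in ball x₀ r ∩ {x | b < T ((ball x₀ (2 * r))ᶜ.indicator f) x},
        ENNReal.ofReal (w x) ∂μ ≤
      ENNReal.ofReal (CT * C₁ * Cc ^ (1 - κ) * (1 - 2 ^ ((finrank ℝ E : ℝ) * δ * (κ - 1)))⁻¹ *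
        M * (∫ x in ball x₀ r, w x ∂μ) ^ κ) := by
  set ρ : ℝ := 2 ^ ((finrank ℝ E : ℝ) * δ * (κ - 1))
  have hρ1 : ρ < 1 := two_rpow_finrank_mul_lt_one E hδ hκ1
  set W := ∫ x in ball x₀ r, w x ∂μ
  have hW : 0 < W := hwpos x₀ r hr
  have hbound : ∀ x ∈ ball x₀ r, T ((ball x₀ (2 * r))ᶜ.indicator f) x ≤
      ENNReal.ofReal (CT * (C₁ * Cc ^ (1 - κ) * M * W ^ (κ - 1) * (1 - ρ)⁻¹)) := fun x hx => calc
    _ ≤ ENNReal.ofReal CT * ∑' ℓ : ℕ, (μ (ball x₀ (2 ^ (ℓ + 2) * r)))⁻¹ *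
          ∫⁻ z in ball x₀ (2 ^ (ℓ + 2) * r),
            ENNReal.ofReal |(ball x₀ (2 * r))ᶜ.indicator f z| ∂μ :=
        hTloc x₀ r hr _ (hf.indicator measurableSet_ball.compl)
          (fun y hy => Set.indicator_of_notMem (Set.notMem_compl_iff.2 hy) f) x hx
    _ ≤ ENNReal.ofReal CT * ∑' ℓ : ℕ, (μ (ball x₀ (2 ^ (ℓ + 2) * r)))⁻¹ *
          ∫⁻ z in ball x₀ (2 ^ (ℓ + 2) * r), ENNReal.ofReal |f z| ∂μ := by
        refine mul_le_mul_right (ENNReal.tsum_le_tsum fun ℓ => mul_le_mul_right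
          (lintegral_mono fun z => ofReal_le_ofReal ?_) _) _
        by_cases hz : z ∈ (ball x₀ (2 * r))ᶜ <;> simp [hz]
    _ ≤ ENNReal.ofReal CT * ENNReal.ofReal (C₁ * Cc ^ (1 - κ) * M * W ^ (κ - 1) * (1 - ρ)⁻¹) := by
        gcongr
        exact tsum_inv_measure_ball_mul_lintegral_le_of_morrey hw0 hwpos hC₁ hA1 hCc hδ hcmp hκ1
          hM hfM x₀ hr
    _ = _ := (ofReal_mul hCT).symm
  have hρ : 0 < 1 - ρ := sub_pos.2 hρ1
  calc _ ≤ ENNReal.ofReal (CT * (C₁ * Cc ^ (1 - κ) * M * W ^ (κ - 1) * (1 - ρ)⁻¹)) *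
        ∫⁻ x in ball x₀ r, ENNReal.ofReal (w x) ∂μ := mul_setLIntegral_inter_superlevel_le hbound b
    _ = ENNReal.ofReal (CT * (C₁ * Cc ^ (1 - κ) * M * W ^ (κ - 1) * (1 - ρ)⁻¹)) *
        ENNReal.ofReal W := by
        rw [ofReal_integral_eq_lintegral_ofReal (Integrable.of_integral_ne_zero hW.ne')
          (ae_of_all _ hw0)]
    _ = _ := by
        rw [← ofReal_mul (by positivity), Real.rpow_sub_one hW.ne']
        congr 1
        field_simp

end AddHaar

theorem stmt10_general {n : ℕ} (hn : 1 ≤ n) (κ : ℝ) (hκ0 : 0 < κ) (hκ1 : κ < 1)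
    (w : EuclideanSpace ℝ (Fin n) → ℝ) (hw0 : ∀ x, 0 ≤ w x)
    (hwpos : ∀ x₀ r, 0 < r → 0 < ∫ x in ball x₀ r, w x)
    (C₁ : ℝ) (hC₁ : 0 < C₁)
    (hA1 : ∀ x₀ r, 0 < r →
      (volume (ball x₀ r)).toReal⁻¹ * ∫ x in ball x₀ r, w x
        ≤ C₁ * essInf w (volume.restrict (ball x₀ r)))
    (Cd : ℝ) (hCd : 0 < Cd)
    (hdouble : ∀ x₀ r, 0 < r → ∫ x in ball x₀ (2 * r), w x ≤ Cd * ∫ x in ball x₀ r, w x)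
    (Cc δ : ℝ) (hCc : 0 < Cc) (hδ : 0 < δ)
    (hcmp : ∀ x₀ r, 0 < r → ∀ E : Set (EuclideanSpace ℝ (Fin n)), MeasurableSet E →
      E ⊆ ball x₀ r →
      (∫ x in E, w x) ≤
        Cc * ((volume E).toReal / (volume (ball x₀ r)).toReal) ^ δ * ∫ x in ball x₀ r, w x)
    (T : (EuclideanSpace ℝ (Fin n) → ℝ) → EuclideanSpace ℝ (Fin n) → ℝ≥0∞)
    (hTsub : ∀ f g x, T (f + g) x ≤ T f x + T g x)
    (A : ℝ) (hA : 0 < A)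
    (hweak : ∀ f, Measurable f → ∀ lam : ℝ, 0 < lam →
      ENNReal.ofReal lam *
          ∫⁻ x in {x | ENNReal.ofReal lam < T f x}, ENNReal.ofReal (w x)
        ≤ ENNReal.ofReal A * ∫⁻ x, ENNReal.ofReal |f x| * ENNReal.ofReal (w x))
    (CT : ℝ) (hCT : 0 < CT)
    (hTloc : ∀ x₀ r, 0 < r → ∀ f : EuclideanSpace ℝ (Fin n) → ℝ, Measurable f →
      (∀ x ∈ ball x₀ (2 * r), f x = 0) → ∀ x ∈ ball x₀ r,
        T f x ≤ ENNReal.ofReal CT * ∑' ℓ : ℕ,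
          (volume (ball x₀ (2 ^ (ℓ + 2) * r)))⁻¹ *
            ∫⁻ z in ball x₀ (2 ^ (ℓ + 2) * r), ENNReal.ofReal |f z|) :
    ∃ C > 0, ∀ f : EuclideanSpace ℝ (Fin n) → ℝ, Measurable f → ∀ M : ℝ, 0 ≤ M →
      (∀ x₀ r, 0 < r →
        ∫⁻ x in ball x₀ r, ENNReal.ofReal |f x| * ENNReal.ofReal (w x)
          ≤ ENNReal.ofReal M * ENNReal.ofReal ((∫ x in ball x₀ r, w x) ^ κ)) →
      ∀ x₀ r, 0 < r → ∀ lam : ℝ, 0 < lam →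
        ENNReal.ofReal lam *
            ∫⁻ x in ball x₀ r ∩ {x | ENNReal.ofReal lam < T f x}, ENNReal.ofReal (w x)
          ≤ ENNReal.ofReal (C * M) * ENNReal.ofReal ((∫ x in ball x₀ r, w x) ^ κ) := by
  have : NeZero n := ⟨by omega⟩
  have hρ := sub_pos.2 (two_rpow_finrank_mul_lt_one (EuclideanSpace ℝ (Fin n)) hδ hκ1)
  refine ⟨2 * (A * Cd ^ κ + CT * C₁ * Cc ^ (1 - κ) *
    (1 - 2 ^ ((finrank ℝ (EuclideanSpace ℝ (Fin n)) : ℝ) * δ * (κ - 1)))⁻¹), by positivity, ?_⟩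
  intro f hf M hM hfM x₀ r hr lam hlam
  have hsplit (x) : T f x ≤
      T ((ball x₀ (2 * r)).indicator f) x + T ((ball x₀ (2 * r))ᶜ.indicator f) x := by
    have := hTsub ((ball x₀ (2 * r)).indicator f) ((ball x₀ (2 * r))ᶜ.indicator f) x
    rwa [Set.indicator_self_add_compl] at this
  have hnear := mul_setLIntegral_superlevel_indicator_ball_le hweak hA.le hw0 hCd.le hκ0.le hM
    hf hfM hr (hdouble x₀ r hr) (half_pos hlam)
  have hfar := mul_setLIntegral_superlevel_indicator_compl_ball_le hCT.le hTloc hw0 hwpos hC₁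
    hA1 hCc hδ hcmp hκ1 hM hf hfM x₀ hr (ENNReal.ofReal (lam / 2))
  have hlam2 : ENNReal.ofReal lam = 2 * ENNReal.ofReal (lam / 2) := by
    rw [two_mul, ← ofReal_add (by positivity) (by positivity), add_halves]
  have hW : 0 < ∫ x in ball x₀ r, w x := hwpos x₀ r hr
  rw [hlam2]
  calc _ ≤ _ := two_mul_mul_setLIntegral_superlevel_le hsplit _ _ _
    _ ≤ _ := mul_le_mul_right (add_le_add hnear hfar) 2
    _ = _ := by
        rw [two_mul, ← ofReal_add (by positivity) (by positivity),
          ← ofReal_add (by positivity) (by positivity), ← ofReal_mul (by positivity)]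
        congr 1
        ring

theorem stmt10 {n : ℕ} (hn : 1 ≤ n) (κ : ℝ) (hκ0 : 0 < κ) (hκ1 : κ < 1)
    (w : EuclideanSpace ℝ (Fin n) → ℝ) (hw0 : ∀ x, 0 ≤ w x) (hwloc : LocallyIntegrable w)
    (hwpos : ∀ x₀ r, 0 < r → 0 < ∫ x in ball x₀ r, w x)
    (C₁ : ℝ) (hC₁ : 0 < C₁)
    (hA1 : ∀ x₀ r, 0 < r →
      (volume (ball x₀ r)).toReal⁻¹ * ∫ x in ball x₀ r, w x
        ≤ C₁ * essInf w (volume.restrict (ball x₀ r)))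
    (Cd : ℝ) (hCd : 0 < Cd)
    (hdouble : ∀ x₀ r, 0 < r → ∫ x in ball x₀ (2 * r), w x ≤ Cd * ∫ x in ball x₀ r, w x)
    (Cc δ : ℝ) (hCc : 0 < Cc) (hδ : 0 < δ)
    (hcmp : ∀ x₀ r, 0 < r → ∀ E : Set (EuclideanSpace ℝ (Fin n)), MeasurableSet E →
      E ⊆ ball x₀ r →
      (∫ x in E, w x) ≤
        Cc * ((volume E).toReal / (volume (ball x₀ r)).toReal) ^ δ * ∫ x in ball x₀ r, w x)
    (T : (EuclideanSpace ℝ (Fin n) → ℝ) → EuclideanSpace ℝ (Fin n) → ℝ≥0∞)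
    (hTmeas : ∀ f, Measurable f → Measurable (T f))
    (hTsub : ∀ f g x, T (f + g) x ≤ T f x + T g x)
    (A : ℝ) (hA : 0 < A)
    (hweak : ∀ f, Measurable f → ∀ lam : ℝ, 0 < lam →
      ENNReal.ofReal lam *
          ∫⁻ x in {x | ENNReal.ofReal lam < T f x}, ENNReal.ofReal (w x)
        ≤ ENNReal.ofReal A * ∫⁻ x, ENNReal.ofReal |f x| * ENNReal.ofReal (w x))
    (CT : ℝ) (hCT : 0 < CT)
    (hTloc : ∀ x₀ r, 0 < r → ∀ f : EuclideanSpace ℝ (Fin n) → ℝ, Measurable f →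
      (∀ x ∈ ball x₀ (2 * r), f x = 0) → ∀ x ∈ ball x₀ r,
        T f x ≤ ENNReal.ofReal CT * ∑' ℓ : ℕ,
          (volume (ball x₀ (2 ^ (ℓ + 2) * r)))⁻¹ *
            ∫⁻ z in ball x₀ (2 ^ (ℓ + 2) * r), ENNReal.ofReal |f z|) :
    ∃ C > 0, ∀ f : EuclideanSpace ℝ (Fin n) → ℝ, Measurable f → ∀ M : ℝ, 0 ≤ M →
      (∀ x₀ r, 0 < r →
        ∫⁻ x in ball x₀ r, ENNReal.ofReal |f x| * ENNReal.ofReal (w x)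
          ≤ ENNReal.ofReal M * ENNReal.ofReal ((∫ x in ball x₀ r, w x) ^ κ)) →
      ∀ x₀ r, 0 < r → ∀ lam : ℝ, 0 < lam →
        ENNReal.ofReal lam *
            ∫⁻ x in ball x₀ r ∩ {x | ENNReal.ofReal lam < T f x}, ENNReal.ofReal (w x)
          ≤ ENNReal.ofReal (C * M) * ENNReal.ofReal ((∫ x in ball x₀ r, w x) ^ κ) :=
  stmt10_general hn κ hκ0 hκ1 w hw0 hwpos C₁ hC₁ hA1 Cd hCd hdouble Cc δ hCc hδ hcmp T hTsub A hA
    hweak CT hCT hTloc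
end

section
/- Suppose $T$ is a sublinear operator mapping measurable functions on $\mathbb{R}^n$ to nonnegative measurable functions such that: (i) $T$ is bounded on $L^p(\mathbb{R}^n)$ for some $1 < p < \infty$; (ii) for every ball $B = B(x_0,r)$, every $f$ supported outside $2B$, and every $x \in B$, $Tf(x) \le C \sum_{\ell=1}^\infty \frac{1}{|B(x_0, 2^{\ell+1} r)|}\int_{B(x_0,2^{\ell+1}r)} |f(z)|\,dz$. Let $\Phi : (0,\infty)\to(0,\infty)$ be increasing with $\Phi(2r) \le D\Phi(r)$ for all $r>0$ and $1 \le D < 2^n$. Then $T$ is bounded on the generalized Morrey space $L^{p,\Phi}$: $\|Tf\|_{L^{p,\Phi}} \le C' \|f\|_{L^{p,\Phi}}$. -/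
/-!
Split `f = f 𝟙_{2B} + f 𝟙_{(2B)ᶜ}` for a ball `B = B(x₀, r)`. The local piece is handled by the
`L^p` bound of `T` and one doubling step of `Φ`. For the far piece, Hölder bounds the mean of `|f|`
over `2^k B` by `θ^k (|B|⁻¹ M^p Φ(r))^{1/p}` with `θ = (D / 2^n)^{1/p}`, because `|2^k B|` grows
like `2^{nk}` while `Φ(2^k r)` grows at most like `D^k`. Since `D < 2^n` these means sum to a
geometric series, so `T` of the far piece is bounded on `B` by a multiple of
`(|B|⁻¹ M^p Φ(r))^{1/p}`, and integrating over `B` gives `M^p Φ(r)` up to a constant.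
-/

open MeasureTheory Metric ENNReal Module

section LIntegral
variable {α : Type*} [MeasurableSpace α] {μ : Measure α} {s : Set α} {p : ℝ}

theorem setLAverage_le_rpow_setLAverage_rpow (hp : 1 < p) {F : α → ℝ≥0∞}
    (hF : AEMeasurable F (μ.restrict s)) (hs₀ : μ s ≠ 0) (hs : μ s ≠ ∞) :
    (μ s)⁻¹ * ∫⁻ x in s, F x ∂μ ≤ ((μ s)⁻¹ * ∫⁻ x in s, F x ^ p ∂μ) ^ p⁻¹ := by
  have hpq := Real.HolderConjugate.conjExponent hp
  have holder := ENNReal.lintegral_mul_le_Lp_mul_Lq (μ.restrict s) hpq hF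
    (aemeasurable_const (b := (1 : ℝ≥0∞)))
  simp only [Pi.mul_apply, mul_one, one_rpow, lintegral_const, one_mul,
    Measure.restrict_apply MeasurableSet.univ, Set.univ_inter, one_div] at holder
  have hq : (p.conjExponent)⁻¹ = 1 - p⁻¹ := by rw [← hpq.inv_add_inv_eq_one]; ring
  calc (μ s)⁻¹ * ∫⁻ x in s, F x ∂μ
      ≤ (μ s)⁻¹ * ((∫⁻ x in s, F x ^ p ∂μ) ^ p⁻¹ * μ s ^ (p.conjExponent)⁻¹) := by gcongr
    _ = ((μ s)⁻¹ * ∫⁻ x in s, F x ^ p ∂μ) ^ p⁻¹ := by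
      rw [hq, ENNReal.rpow_sub _ _ hs₀ hs, rpow_one,
        ENNReal.mul_rpow_of_nonneg _ _ (inv_nonneg.2 hpq.nonneg),
        ENNReal.inv_rpow, mul_left_comm, div_eq_mul_inv, ← mul_assoc (μ s)⁻¹,
        ENNReal.inv_mul_cancel hs₀ hs, one_mul, mul_comm]

theorem lintegral_rpow_le_of_le_add (hp : 1 ≤ p) {u v w : α → ℝ≥0∞} (hv : AEMeasurable v μ)
    (huvw : ∀ x, u x ≤ v x + w x) :
    ∫⁻ x, u x ^ p ∂μ ≤ 2 ^ (p - 1) * (∫⁻ x, v x ^ p ∂μ + ∫⁻ x, w x ^ p ∂μ) := by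
  calc ∫⁻ x, u x ^ p ∂μ ≤ ∫⁻ x, 2 ^ (p - 1) * (v x ^ p + w x ^ p) ∂μ :=
        lintegral_mono fun x => (rpow_le_rpow (huvw x) (by linarith)).trans
          (rpow_add_le_mul_rpow_add_rpow _ _ hp)
    _ = 2 ^ (p - 1) * (∫⁻ x, v x ^ p ∂μ + ∫⁻ x, w x ^ p ∂μ) := by
      rw [lintegral_const_mul' _ _ (rpow_ne_top_of_nonneg (by linarith) ofNat_ne_top),
        lintegral_add_left' (hv.pow_const p)]

theorem setLIntegral_rpow_le_of_le_mul_rpow (hp : 0 < p) (hs₀ : μ s ≠ 0) (hs : μ s ≠ ∞)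
    {u : α → ℝ≥0∞} {c X : ℝ≥0∞} (hu : ∀ x ∈ s, u x ≤ c * ((μ s)⁻¹ * X) ^ p⁻¹) :
    ∫⁻ x in s, u x ^ p ∂μ ≤ c ^ p * X := by
  calc ∫⁻ x in s, u x ^ p ∂μ ≤ ∫⁻ _ in s, (c * ((μ s)⁻¹ * X) ^ p⁻¹) ^ p ∂μ :=
        setLIntegral_mono measurable_const fun x hx => rpow_le_rpow (hu x hx) hp.le
    _ = c ^ p * X := by
      rw [setLIntegral_const, mul_rpow_of_nonneg _ _ hp.le, rpow_inv_rpow hp.ne', mul_assoc,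
        mul_right_comm, ENNReal.inv_mul_cancel hs₀ hs, one_mul]

end LIntegral

theorem rpow_ofReal_div_two_pow_lt_one {D p : ℝ} {n : ℕ} (hD : D < 2 ^ n) (hp : 0 < p) :
    (ENNReal.ofReal D / 2 ^ n) ^ p⁻¹ < 1 := by
  refine rpow_lt_one ((ENNReal.div_lt_iff (by simp) (by simp)).2 ?_) (inv_pos.2 hp)
  rw [one_mul, ← ofReal_ofNat 2, ← ENNReal.ofReal_pow zero_le_two]
  exact ENNReal.ofReal_lt_ofReal_iff'.2 ⟨hD, by positivity⟩

theorem exists_pos_ofReal_rpow_mul_eq {c : ℝ≥0∞} (hc₀ : c ≠ 0) (hc : c ≠ ∞) {p : ℝ} (hp : p ≠ 0) :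
    ∃ C : ℝ, 0 < C ∧ ∀ y : ℝ, ENNReal.ofReal (C ^ p * y) = c * ENNReal.ofReal y :=
  ⟨c.toReal ^ p⁻¹, Real.rpow_pos_of_pos (toReal_pos hc₀ hc) _, fun y => by
    rw [Real.rpow_inv_rpow toReal_nonneg hp, ENNReal.ofReal_mul toReal_nonneg, ofReal_toReal hc]⟩

theorem le_pow_mul_of_doubling {Φ : ℝ → ℝ} {D : ℝ} (hD : 0 ≤ D)
    (hdouble : ∀ r > 0, Φ (2 * r) ≤ D * Φ r) {r : ℝ} (hr : 0 < r) (k : ℕ) :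
    Φ (2 ^ k * r) ≤ D ^ k * Φ r := by
  induction k with
  | zero => simp
  | succ k ih =>
    calc Φ (2 ^ (k + 1) * r) = Φ (2 * (2 ^ k * r)) := by ring_nf
      _ ≤ D * Φ (2 ^ k * r) := hdouble _ (by positivity)
      _ ≤ D ^ (k + 1) * Φ r := by rw [pow_succ', mul_assoc]; gcongr

section Morrey
variable {E : Type*} [PseudoMetricSpace E] [MeasurableSpace E]

/-- `MorreyBound μ p Φ M f` says `‖f‖_{L^{p,Φ}} ≤ M`. -/
def MorreyBound (μ : Measure E) (p : ℝ) (Φ : ℝ → ℝ) (M : ℝ) (f : E → ℝ) : Prop :=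
  ∀ (x₀ : E) (r : ℝ), 0 < r →
    ∫⁻ x in ball x₀ r, ENNReal.ofReal |f x| ^ p ∂μ ≤ ENNReal.ofReal (M ^ p * Φ r)

variable {μ : Measure E} {p : ℝ} {Φ : ℝ → ℝ} {M D : ℝ} {f g : E → ℝ}

theorem MorreyBound.mono (hf : MorreyBound μ p Φ M f) (hp : 0 ≤ p) (hgf : ∀ x, |g x| ≤ |f x|) :
    MorreyBound μ p Φ M g := fun x₀ r hr =>
  (lintegral_mono fun x => rpow_le_rpow (ofReal_le_ofReal (hgf x)) hp).trans (hf x₀ r hr)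

theorem MorreyBound.sub_indicator (hf : MorreyBound μ p Φ M f) (hp : 0 ≤ p) (s : Set E) :
    MorreyBound μ p Φ M (f - s.indicator f) :=
  hf.mono hp fun x => by by_cases hx : x ∈ s <;> simp [hx]

theorem MorreyBound.lintegral_indicator_ball_le [OpensMeasurableSpace E]
    (hf : MorreyBound μ p Φ M f) (hp : 0 < p) (hM : 0 ≤ M) (hD : 0 ≤ D) (x₀ : E) {r : ℝ}
    (hr : 0 < r) (hdouble : Φ (2 * r) ≤ D * Φ r) :
    ∫⁻ x, ENNReal.ofReal |(ball x₀ (2 * r)).indicator f x| ^ p ∂μ ≤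
      ENNReal.ofReal D * ENNReal.ofReal (M ^ p * Φ r) := by
  have hind : (fun x => ENNReal.ofReal |(ball x₀ (2 * r)).indicator f x| ^ p) =
      (ball x₀ (2 * r)).indicator fun x => ENNReal.ofReal |f x| ^ p :=
    (Set.indicator_comp_of_zero (g := fun y : ℝ => ENNReal.ofReal |y| ^ p)
      (by simp [zero_rpow_of_pos hp])).symm
  rw [hind, lintegral_indicator measurableSet_ball, ← ENNReal.ofReal_mul hD]
  refine (hf x₀ (2 * r) (by positivity)).trans (ofReal_le_ofReal ?_)
  calc M ^ p * Φ (2 * r) ≤ M ^ p * (D * Φ r) := by gcongr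
    _ = D * (M ^ p * Φ r) := by ring

end Morrey

section MorreyHaar
variable {E : Type*} [NormedAddCommGroup E] [NormedSpace ℝ E] [FiniteDimensional ℝ E]
  [MeasurableSpace E] [BorelSpace E] {μ : Measure E} [μ.IsAddHaarMeasure] {p : ℝ} {Φ : ℝ → ℝ}
  {M D : ℝ} {f : E → ℝ}

theorem measure_ball_two_pow_mul (x : E) (r : ℝ) (k : ℕ) :
    μ (ball x (2 ^ k * r)) = (2 ^ finrank ℝ E) ^ k * μ (ball x r) := by
  rw [Measure.addHaar_ball_mul_of_pos μ x (by positivity), Measure.addHaar_ball_center μ x,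
    mul_comm, ENNReal.ofReal_pow (by positivity), ENNReal.ofReal_pow zero_le_two, ofReal_ofNat,
    ← pow_mul, ← pow_mul, mul_comm k, mul_comm]

theorem MorreyBound.setLAverage_ball_two_pow_mul_le (hf : MorreyBound μ p Φ M f)
    (hfm : Measurable f) (hp : 1 < p) (hM : 0 ≤ M) (hD : 0 ≤ D)
    (hdouble : ∀ r > 0, Φ (2 * r) ≤ D * Φ r) (x₀ : E) {r : ℝ} (hr : 0 < r) (k : ℕ) :
    (μ (ball x₀ (2 ^ k * r)))⁻¹ * ∫⁻ z in ball x₀ (2 ^ k * r), ENNReal.ofReal |f z| ∂μ ≤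
      ((ENNReal.ofReal D / 2 ^ finrank ℝ E) ^ p⁻¹) ^ k *
        ((μ (ball x₀ r))⁻¹ * ENNReal.ofReal (M ^ p * Φ r)) ^ p⁻¹ := by
  have hp0 : 0 < p := zero_lt_one.trans hp
  have h2 : (2 : ℝ≥0∞) ^ finrank ℝ E ≠ 0 := pow_ne_zero _ two_ne_zero
  have h2' : (2 : ℝ≥0∞) ^ finrank ℝ E ≠ ∞ := pow_ne_top ofNat_ne_top
  calc (μ (ball x₀ (2 ^ k * r)))⁻¹ * ∫⁻ z in ball x₀ (2 ^ k * r), ENNReal.ofReal |f z| ∂μ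
      ≤ ((μ (ball x₀ (2 ^ k * r)))⁻¹ *
          ∫⁻ z in ball x₀ (2 ^ k * r), ENNReal.ofReal |f z| ^ p ∂μ) ^ p⁻¹ :=
        setLAverage_le_rpow_setLAverage_rpow hp hfm.abs.ennreal_ofReal.aemeasurable
          (measure_ball_pos μ x₀ (by positivity)).ne' measure_ball_lt_top.ne
    _ ≤ ((μ (ball x₀ (2 ^ k * r)))⁻¹ * ENNReal.ofReal (D ^ k * (M ^ p * Φ r))) ^ p⁻¹ := by
        gcongr
        refine (hf x₀ _ (by positivity)).trans (ofReal_le_ofReal ?_)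
        calc M ^ p * Φ (2 ^ k * r) ≤ M ^ p * (D ^ k * Φ r) := by
              gcongr; exact le_pow_mul_of_doubling hD hdouble hr k
          _ = D ^ k * (M ^ p * Φ r) := by ring
    _ = ((ENNReal.ofReal D / 2 ^ finrank ℝ E) ^ p⁻¹) ^ k *
          ((μ (ball x₀ r))⁻¹ * ENNReal.ofReal (M ^ p * Φ r)) ^ p⁻¹ := by
        rw [measure_ball_two_pow_mul x₀ r, ENNReal.mul_inv (Or.inl (pow_ne_zero _ h2))
          (Or.inl (pow_ne_top h2')), ENNReal.ofReal_mul (pow_nonneg hD k),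
          ENNReal.ofReal_pow hD, ← rpow_mul_natCast, mul_comm p⁻¹, rpow_natCast_mul,
          ← mul_rpow_of_nonneg _ _ (inv_nonneg.2 hp0.le), div_eq_mul_inv, mul_pow,
          ENNReal.inv_pow]
        ring_nf

theorem MorreyBound.tsum_setLAverage_le (hf : MorreyBound μ p Φ M f)
    (hfm : Measurable f) (hp : 1 < p) (hM : 0 ≤ M) (hD : 0 ≤ D)
    (hdouble : ∀ r > 0, Φ (2 * r) ≤ D * Φ r) (x₀ : E) {r : ℝ} (hr : 0 < r) :
    ∑' ℓ : ℕ, (μ (ball x₀ (2 ^ (ℓ + 2) * r)))⁻¹ *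
        ∫⁻ z in ball x₀ (2 ^ (ℓ + 2) * r), ENNReal.ofReal |f z| ∂μ ≤
      ((ENNReal.ofReal D / 2 ^ finrank ℝ E) ^ p⁻¹) ^ 2 *
        (1 - (ENNReal.ofReal D / 2 ^ finrank ℝ E) ^ p⁻¹)⁻¹ *
        ((μ (ball x₀ r))⁻¹ * ENNReal.ofReal (M ^ p * Φ r)) ^ p⁻¹ := by
  set θ := (ENNReal.ofReal D / 2 ^ finrank ℝ E) ^ p⁻¹
  calc _ ≤ ∑' ℓ : ℕ, θ ^ (ℓ + 2) * ((μ (ball x₀ r))⁻¹ * ENNReal.ofReal (M ^ p * Φ r)) ^ p⁻¹ :=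
        ENNReal.tsum_le_tsum fun ℓ =>
          hf.setLAverage_ball_two_pow_mul_le hfm hp hM hD hdouble x₀ hr (ℓ + 2)
    _ = _ := by
      simp_rw [pow_add, mul_right_comm _ (θ ^ 2)]
      rw [ENNReal.tsum_mul_right, ENNReal.tsum_mul_right, ENNReal.tsum_geometric]
      ring

end MorreyHaar

theorem stmt11_general {n : ℕ} (p : ℝ) (hp : 1 < p)
    (Φ : ℝ → ℝ) (D : ℝ) (hD1 : 1 ≤ D) (hD2 : D < 2 ^ n)
    (hdouble : ∀ r > 0, Φ (2 * r) ≤ D * Φ r)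
    (T : (EuclideanSpace ℝ (Fin n) → ℝ) → EuclideanSpace ℝ (Fin n) → ℝ≥0∞)
    (hTmeas : ∀ f, Measurable f → Measurable (T f))
    (hTsub : ∀ f g x, T (f + g) x ≤ T f x + T g x)
    (A : ℝ) (hA : 0 < A)
    (hTLp : ∀ f, Measurable f →
      ∫⁻ x, (T f x) ^ p ≤ ENNReal.ofReal A * ∫⁻ x, (ENNReal.ofReal |f x|) ^ p)
    (CT : ℝ)
    (hTloc : ∀ x₀ r, 0 < r → ∀ f : EuclideanSpace ℝ (Fin n) → ℝ, Measurable f →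
      (∀ x ∈ ball x₀ (2 * r), f x = 0) → ∀ x ∈ ball x₀ r,
        T f x ≤ ENNReal.ofReal CT * ∑' ℓ : ℕ,
          (volume (ball x₀ (2 ^ (ℓ + 2) * r)))⁻¹ *
            ∫⁻ z in ball x₀ (2 ^ (ℓ + 2) * r), ENNReal.ofReal |f z|) :
    ∃ C > 0, ∀ f : EuclideanSpace ℝ (Fin n) → ℝ, Measurable f → ∀ M : ℝ, 0 ≤ M →
      (∀ (x₀ : EuclideanSpace ℝ (Fin n)) (r : ℝ), 0 < r →
        ∫⁻ x in ball x₀ r, (ENNReal.ofReal |f x|) ^ p ≤ ENNReal.ofReal (M ^ p * Φ r)) →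
      ∀ (x₀ : EuclideanSpace ℝ (Fin n)) (r : ℝ), 0 < r →
        ∫⁻ x in ball x₀ r, (T f x) ^ p ≤ ENNReal.ofReal (C ^ p * M ^ p * Φ r) := by
  have hp0 : 0 < p := zero_lt_one.trans hp
  have hD : 0 ≤ D := zero_le_one.trans hD1
  set θ : ℝ≥0∞ := (ENNReal.ofReal D / 2 ^ n) ^ p⁻¹
  have hθ : θ < 1 := rpow_ofReal_div_two_pow_lt_one hD2 hp0
  set K := ENNReal.ofReal CT * (θ ^ 2 * (1 - θ)⁻¹)
  have hK : K ≠ ∞ := by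
    have := (tsub_pos_of_lt hθ).ne'
    have := ne_top_of_lt hθ
    finiteness
  obtain ⟨C, hC, hCc⟩ := exists_pos_ofReal_rpow_mul_eq
    (c := 2 ^ (p - 1) * (ENNReal.ofReal A * ENNReal.ofReal D + K ^ p)) (by positivity)
    (by finiteness) hp0.ne'
  refine ⟨C, hC, fun f hf M hM hMorrey x₀ r hr => ?_⟩
  rw [mul_assoc, hCc]
  set g := (ball x₀ (2 * r)).indicator f
  have hg : Measurable g := hf.indicator measurableSet_ball
  have hlocal : ∫⁻ x in ball x₀ r, T g x ^ p ≤
      ENNReal.ofReal A * (ENNReal.ofReal D * ENNReal.ofReal (M ^ p * Φ r)) :=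
    (setLIntegral_le_lintegral _ _).trans <| (hTLp g hg).trans <| mul_le_mul_right
      (MorreyBound.lintegral_indicator_ball_le hMorrey hp0 hM hD x₀ hr (hdouble r hr)) _
  have hfar : ∀ x ∈ ball x₀ r, T (f - g) x ≤
      K * ((volume (ball x₀ r))⁻¹ * ENNReal.ofReal (M ^ p * Φ r)) ^ p⁻¹ := by
    intro x hx
    have htail := (MorreyBound.sub_indicator hMorrey hp0.le _).tsum_setLAverage_le (hf.sub hg)
      hp hM hD hdouble x₀ hr
    rw [finrank_euclideanSpace_fin] at htail
    refine (hTloc x₀ r hr _ (hf.sub hg) (fun y hy => by simp [g, hy]) x hx).trans ?_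
    rw [mul_assoc]
    exact mul_le_mul_right htail _
  calc ∫⁻ x in ball x₀ r, T f x ^ p
      ≤ 2 ^ (p - 1) * ((∫⁻ x in ball x₀ r, T g x ^ p) + ∫⁻ x in ball x₀ r, T (f - g) x ^ p) :=
        lintegral_rpow_le_of_le_add hp.le (hTmeas g hg).aemeasurable
          (fun x => by simpa using hTsub g (f - g) x)
    _ ≤ 2 ^ (p - 1) * (ENNReal.ofReal A * (ENNReal.ofReal D * ENNReal.ofReal (M ^ p * Φ r)) +
          K ^ p * ENNReal.ofReal (M ^ p * Φ r)) :=
        mul_le_mul_right (add_le_add hlocal (setLIntegral_rpow_le_of_le_mul_rpow hp0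
          (measure_ball_pos _ _ hr).ne' measure_ball_lt_top.ne hfar)) _
    _ = 2 ^ (p - 1) * (ENNReal.ofReal A * ENNReal.ofReal D + K ^ p) *
          ENNReal.ofReal (M ^ p * Φ r) := by ring

theorem stmt11 {n : ℕ} (hn : 1 ≤ n) (p : ℝ) (hp : 1 < p)
    (Φ : ℝ → ℝ) (hΦpos : ∀ r > 0, 0 < Φ r) (hΦmono : MonotoneOn Φ (Set.Ioi 0))
    (D : ℝ) (hD1 : 1 ≤ D) (hD2 : D < 2 ^ n)
    (hdouble : ∀ r > 0, Φ (2 * r) ≤ D * Φ r)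
    (T : (EuclideanSpace ℝ (Fin n) → ℝ) → EuclideanSpace ℝ (Fin n) → ℝ≥0∞)
    (hTmeas : ∀ f, Measurable f → Measurable (T f))
    (hTsub : ∀ f g x, T (f + g) x ≤ T f x + T g x)
    (A : ℝ) (hA : 0 < A)
    (hTLp : ∀ f, Measurable f →
      ∫⁻ x, (T f x) ^ p ≤ ENNReal.ofReal A * ∫⁻ x, (ENNReal.ofReal |f x|) ^ p)
    (CT : ℝ) (hCT : 0 < CT)
    (hTloc : ∀ x₀ r, 0 < r → ∀ f : EuclideanSpace ℝ (Fin n) → ℝ, Measurable f →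
      (∀ x ∈ ball x₀ (2 * r), f x = 0) → ∀ x ∈ ball x₀ r,
        T f x ≤ ENNReal.ofReal CT * ∑' ℓ : ℕ,
          (volume (ball x₀ (2 ^ (ℓ + 2) * r)))⁻¹ *
            ∫⁻ z in ball x₀ (2 ^ (ℓ + 2) * r), ENNReal.ofReal |f z|) :
    ∃ C > 0, ∀ f : EuclideanSpace ℝ (Fin n) → ℝ, Measurable f → ∀ M : ℝ, 0 ≤ M →
      (∀ (x₀ : EuclideanSpace ℝ (Fin n)) (r : ℝ), 0 < r →
        ∫⁻ x in ball x₀ r, (ENNReal.ofReal |f x|) ^ p ≤ ENNReal.ofReal (M ^ p * Φ r)) →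
      ∀ (x₀ : EuclideanSpace ℝ (Fin n)) (r : ℝ), 0 < r →
        ∫⁻ x in ball x₀ r, (T f x) ^ p ≤ ENNReal.ofReal (C ^ p * M ^ p * Φ r) :=
  stmt11_general p hp Φ D hD1 hD2 hdouble T hTmeas hTsub A hA hTLp CT hTloc
end

section
/- Let $B = B(x_0, r_B) \subset \mathbb{R}^n$ be a ball, and let $f \in L^1_{loc}(\mathbb{R}^n)$ vanish on $2B$. Then for every $x \in B$, the intrinsic square function satisfies the pointwise bound $\mathcal{S}_\alpha(f)(x) \le C_n \sum_{\ell=1}^\infty \frac{1}{|2^{\ell+1}B|}\int_{2^{\ell+1}B \setminus 2^\ell B} |f(z)|\,dz$, where $C_n$ depends only on $n$ and $\alpha \in (0,1]$. -/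
open MeasureTheory Metric ENNReal

/-- The family `𝒞_α` of mean-zero functions supported in the unit ball that are
Hölder continuous of order `α` with constant `1`. -/
def holderClass (n : ℕ) (α : ℝ) : Set (EuclideanSpace ℝ (Fin n) → ℝ) :=
  {φ | Function.support φ ⊆ closedBall 0 1 ∧ (∫ x, φ x) = 0 ∧
    ∀ x x', |φ x - φ x'| ≤ ‖x - x'‖ ^ α}

/-- `A_α(f)(y,t) = sup_{φ ∈ 𝒞_α} |f * φ_t(y)|`. -/
noncomputable def intrinsicA (n : ℕ) (α : ℝ) (f : EuclideanSpace ℝ (Fin n) → ℝ)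
    (y : EuclideanSpace ℝ (Fin n)) (t : ℝ) : ℝ≥0∞ :=
  ⨆ φ ∈ holderClass n α, ENNReal.ofReal |∫ z, φ (t⁻¹ • (y - z)) / t ^ n * f z|

/-- The intrinsic square function `𝒮_α(f)`. -/
noncomputable def intrinsicS (n : ℕ) (α : ℝ) (f : EuclideanSpace ℝ (Fin n) → ℝ)
    (x : EuclideanSpace ℝ (Fin n)) : ℝ≥0∞ :=
  (∫⁻ p : EuclideanSpace ℝ (Fin n) × ℝ in {p | dist x p.1 < p.2},
      (intrinsicA n α f p.1 p.2) ^ 2 / ENNReal.ofReal (p.2 ^ (n + 1))) ^ ((1 : ℝ) / 2)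

/-!
For `x ∈ B(x₀, r_B)` and `|x - y| < t`, every kernel `φ_t(y - ·)` with `φ ∈ 𝒞_α` is bounded by
`3^α t^{-n}` and supported in `B(y, t)`. As `f` vanishes on `B(x₀, 2 r_B)`, this ball only meets
the dyadic annuli `B(x₀, 2^{ℓ+2} r_B) \ B(x₀, 2^{ℓ+1} r_B)` with `τ_ℓ = 2^{ℓ+2} r_B / 8 < t`, so
`A_α(f)(y, t) ≤ 3^α t^{-n} ∑_ℓ a_ℓ 1_{t > τ_ℓ}` with `a_ℓ` the integral of `|f|` over the `ℓ`-th
annulus. Integrating in `y` over the cone leaves `∫ (∑_ℓ a_ℓ 1_{t > τ_ℓ})² t^{-2n-1} dt`, and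
Minkowski's inequality in `L²(t^{-2n-1} dt)` bounds its square root by
`∑_ℓ a_ℓ ‖1_{t > τ_ℓ}‖₂ ≲ ∑_ℓ a_ℓ τ_ℓ^{-n} ≈ ∑_ℓ a_ℓ / |B(x₀, 2^{ℓ+2} r_B)|`.
-/

theorem sq_tsum (c : ℕ → ℝ≥0∞) : (∑' i, c i) ^ 2 = ∑' i, ∑' j, c i * c j := by
  rw [sq, ← ENNReal.tsum_mul_right]
  exact tsum_congr fun i => ENNReal.tsum_mul_left.symm

theorem sq_rpow_one_half (x : ℝ≥0∞) : (x ^ 2) ^ (1 / 2 : ℝ) = x := by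
  rw [← ENNReal.rpow_natCast, ← ENNReal.rpow_mul]; norm_num

theorem measure_inter_le_rpow_mul_rpow {α : Type*} [MeasurableSpace α] (μ : Measure α)
    (s t : Set α) : μ (s ∩ t) ≤ μ s ^ (1 / 2 : ℝ) * μ t ^ (1 / 2 : ℝ) :=
  calc μ (s ∩ t) = μ (s ∩ t) ^ (1 / 2 : ℝ) * μ (s ∩ t) ^ (1 / 2 : ℝ) := by
        rw [← ENNReal.rpow_add_of_nonneg _ _ (by norm_num) (by norm_num)]; norm_num
    _ ≤ μ s ^ (1 / 2 : ℝ) * μ t ^ (1 / 2 : ℝ) := by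
        gcongr
        exacts [Set.inter_subset_left, Set.inter_subset_right]

theorem lintegral_sq_tsum_indicator_le {α : Type*} [MeasurableSpace α] (μ : Measure α)
    {s : ℕ → Set α} (hs : ∀ i, MeasurableSet (s i)) (a : ℕ → ℝ≥0∞) :
    ∫⁻ x, (∑' i, (s i).indicator (fun _ => a i) x) ^ 2 ∂μ
      ≤ (∑' i, a i * μ (s i) ^ (1 / 2 : ℝ)) ^ 2 := by
  have hmeas : ∀ i j, Measurable fun x => (s i).indicator (fun _ => a i) x *
      (s j).indicator (fun _ => a j) x := fun i j =>
    (measurable_const.indicator (hs i)).mul (measurable_const.indicator (hs j))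
  simp_rw [sq_tsum]
  rw [lintegral_tsum fun i => (Measurable.tsum (hmeas i)).aemeasurable]
  refine ENNReal.tsum_le_tsum fun i => ?_
  rw [lintegral_tsum fun j => (hmeas i j).aemeasurable]
  refine ENNReal.tsum_le_tsum fun j => ?_
  calc ∫⁻ x, (s i).indicator (fun _ => a i) x * (s j).indicator (fun _ => a j) x ∂μ
      = a i * a j * μ (s i ∩ s j) := by
        rw [← lintegral_indicator_const (hs i |>.inter (hs j))]
        exact lintegral_congr fun x => (Set.inter_indicator_mul _ _ x).symm
    _ ≤ a i * μ (s i) ^ (1 / 2 : ℝ) * (a j * μ (s j) ^ (1 / 2 : ℝ)) := by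
        grw [measure_inter_le_rpow_mul_rpow]
        exact le_of_eq (by ring)

theorem setLIntegral_cone_eq {E : Type*} [MeasureSpace E] [PseudoMetricSpace E]
    [OpensMeasurableSpace E] [SFinite (volume : Measure E)] (x : E) {h : ℝ → ℝ≥0∞}
    (hh : Measurable h) :
    ∫⁻ p : E × ℝ in {p | dist x p.1 < p.2}, h p.2 = ∫⁻ t, volume (ball x t) * h t := by
  have hcone : MeasurableSet {p : E × ℝ | dist x p.1 < p.2} :=
    measurableSet_lt ((continuous_const.dist continuous_id).measurable.comp measurable_fst)
      measurable_snd
  have hmeas : Measurable ({p : E × ℝ | dist x p.1 < p.2}.indicator fun p => h p.2) :=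
    (hh.comp measurable_snd).indicator hcone
  rw [← lintegral_indicator hcone, Measure.volume_eq_prod,
    lintegral_prod_symm _ hmeas.aemeasurable]
  refine lintegral_congr fun t => ?_
  rw [mul_comm, ← lintegral_indicator_const measurableSet_ball]
  refine lintegral_congr fun y => ?_
  simp only [Set.indicator, Set.mem_ofPred_eq, mem_ball, dist_comm y x]

theorem withDensity_rpow_apply_Ioi {k τ : ℝ} (hk : 0 < k) (hτ : 0 < τ) :
    volume.withDensity (fun t => ENNReal.ofReal (t ^ (-(k + 1)))) (Set.Ioi τ)
      = ENNReal.ofReal (τ ^ (-k) / k) := by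
  have hlt : -(k + 1) < -1 := by linarith
  rw [withDensity_apply _ measurableSet_Ioi, ← ofReal_integral_eq_lintegral_ofReal
    (integrableOn_Ioi_rpow_of_lt hlt hτ), integral_Ioi_rpow_of_lt hlt hτ]
  · congr 1
    rw [show -(k + 1) + 1 = -k by ring, neg_div_neg_eq]
  · filter_upwards [self_mem_ae_restrict measurableSet_Ioi] with t ht
    exact Real.rpow_nonneg (hτ.trans ht).le _

theorem withDensity_Ioi_rpow_one_half_le {n : ℕ} (hn : 1 ≤ n) {τ : ℝ} (hτ : 0 < τ) :
    volume.withDensity (fun t => ENNReal.ofReal (t ^ (-(2 * n + 1 : ℝ)))) (Set.Ioi τ)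
        ^ (1 / 2 : ℝ) ≤ (ENNReal.ofReal (τ ^ n))⁻¹ := by
  have hk : (0 : ℝ) < 2 * n := by positivity
  rw [withDensity_rpow_apply_Ioi hk hτ]
  calc ENNReal.ofReal (τ ^ (-(2 * n : ℝ)) / (2 * n)) ^ (1 / 2 : ℝ)
      ≤ (((ENNReal.ofReal (τ ^ n))⁻¹) ^ 2) ^ (1 / 2 : ℝ) := by
        gcongr
        have hpow : τ ^ (-(2 * n : ℝ)) = ((τ ^ n)⁻¹) ^ 2 := by
          rw [Real.rpow_neg hτ.le, inv_pow, ← pow_mul, mul_comm n 2, ← Real.rpow_natCast]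
          push_cast
          rfl
        rw [← ENNReal.ofReal_inv_of_pos (by positivity), ← ENNReal.ofReal_pow (by positivity),
          hpow]
        refine ENNReal.ofReal_le_ofReal (div_le_of_le_mul₀ hk.le (by positivity) ?_)
        exact le_mul_of_one_le_right (by positivity) (by norm_cast; omega)
    _ = (ENNReal.ofReal (τ ^ n))⁻¹ := sq_rpow_one_half _

theorem inv_ofReal_div_eight_pow {n : ℕ} (x₀ : EuclideanSpace ℝ (Fin n)) {r : ℝ}
    (hr : 0 < r) :
    (ENNReal.ofReal ((r / 8) ^ n))⁻¹
      = ENNReal.ofReal (8 ^ n) * volume (ball (0 : EuclideanSpace ℝ (Fin n)) 1)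
          * (volume (ball x₀ r))⁻¹ := by
  set v := volume (ball (0 : EuclideanSpace ℝ (Fin n)) 1)
  have hv0 : v ≠ 0 := (measure_ball_pos _ _ one_pos).ne'
  have hvt : v ≠ ⊤ := measure_ball_lt_top.ne
  rw [Measure.addHaar_ball_of_pos volume x₀ hr, finrank_euclideanSpace_fin,
    ENNReal.mul_inv (Or.inr hvt) (Or.inl ENNReal.ofReal_ne_top),
    show ∀ a b : ℝ≥0∞, a * v * (b * v⁻¹) = a * b * (v * v⁻¹) from fun a b => by ring,
    ENNReal.mul_inv_cancel hv0 hvt, mul_one, ← ENNReal.ofReal_inv_of_pos (by positivity),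
    ← ENNReal.ofReal_inv_of_pos (by positivity), ← ENNReal.ofReal_mul (by positivity)]
  congr 1
  field_simp
  rw [← mul_pow, div_mul_cancel₀ r (by norm_num)]

section holderClass

variable {n : ℕ} {α : ℝ} {φ : EuclideanSpace ℝ (Fin n) → ℝ}

theorem holderClass_apply_eq_zero (hφ : φ ∈ holderClass n α) {w : EuclideanSpace ℝ (Fin n)}
    (hw : 1 < ‖w‖) : φ w = 0 :=
  Function.notMem_support.1 fun h => hw.not_ge (by simpa using hφ.1 h)

theorem abs_le_of_mem_holderClass (hn : 1 ≤ n) (hφ : φ ∈ holderClass n α)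
    (w : EuclideanSpace ℝ (Fin n)) : |φ w| ≤ 3 ^ α := by
  by_cases hw : ‖w‖ ≤ 1
  · set e : EuclideanSpace ℝ (Fin n) := (3 : ℝ) • EuclideanSpace.single ⟨0, hn⟩ 1
    have he : ‖e‖ = 3 := by simp [e, norm_smul]
    have hout : φ (w + e) = 0 := by
      refine holderClass_apply_eq_zero hφ ?_
      have := norm_sub_le (w + e) w
      rw [add_sub_cancel_left, he] at this
      linarith
    calc |φ w| = |φ w - φ (w + e)| := by rw [hout, sub_zero]
      _ ≤ ‖w - (w + e)‖ ^ α := hφ.2.2 _ _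
      _ = 3 ^ α := by rw [sub_add_cancel_left, norm_neg, he]
  · rw [holderClass_apply_eq_zero hφ (not_le.1 hw), abs_zero]
    positivity

theorem ofReal_abs_integral_le_of_mem_holderClass (hn : 1 ≤ n) (hφ : φ ∈ holderClass n α)
    (f : EuclideanSpace ℝ (Fin n) → ℝ) (y : EuclideanSpace ℝ (Fin n)) {t : ℝ} (ht : 0 < t) :
    ENNReal.ofReal |∫ z, φ (t⁻¹ • (y - z)) / t ^ n * f z|
      ≤ ENNReal.ofReal (3 ^ α / t ^ n) * ∫⁻ z in closedBall y t, ENNReal.ofReal |f z| := by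
  have hpt : ∀ z, ‖φ (t⁻¹ • (y - z)) / t ^ n * f z‖ₑ
      ≤ (closedBall y t).indicator (fun z => ENNReal.ofReal (3 ^ α / t ^ n)
          * ENNReal.ofReal |f z|) z := by
    intro z
    rw [Real.enorm_eq_ofReal_abs]
    by_cases hz : z ∈ closedBall y t
    · rw [Set.indicator_of_mem hz, ← ENNReal.ofReal_mul (by positivity), abs_mul, abs_div,
        abs_of_pos (pow_pos ht n)]
      gcongr
      exact abs_le_of_mem_holderClass hn hφ _
    · have hfar : 1 < ‖t⁻¹ • (y - z)‖ := by
        rw [norm_smul, norm_inv, Real.norm_of_nonneg ht.le, ← dist_eq_norm, dist_comm,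
          one_lt_inv_mul₀ ht]
        simpa using hz
      simp [holderClass_apply_eq_zero hφ hfar, Set.indicator_of_notMem hz]
  calc ENNReal.ofReal |∫ z, φ (t⁻¹ • (y - z)) / t ^ n * f z|
      ≤ ∫⁻ z, ‖φ (t⁻¹ • (y - z)) / t ^ n * f z‖ₑ := by
        rw [← Real.enorm_eq_ofReal_abs]; exact enorm_integral_le_lintegral_enorm _
    _ ≤ ∫⁻ z in closedBall y t, ENNReal.ofReal (3 ^ α / t ^ n) * ENNReal.ofReal |f z| := by
        rw [← lintegral_indicator measurableSet_closedBall]; exact lintegral_mono hpt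
    _ = _ := lintegral_const_mul' _ _ ENNReal.ofReal_ne_top

theorem intrinsicA_le (hn : 1 ≤ n) (f : EuclideanSpace ℝ (Fin n) → ℝ)
    (y : EuclideanSpace ℝ (Fin n)) {t : ℝ} (ht : 0 < t) :
    intrinsicA n α f y t
      ≤ ENNReal.ofReal (3 ^ α / t ^ n) * ∫⁻ z in closedBall y t, ENNReal.ofReal |f z| :=
  iSup₂_le fun _ hφ => ofReal_abs_integral_le_of_mem_holderClass hn hφ f y ht

end holderClass

section annuli

variable {E : Type*} [PseudoMetricSpace E]

theorem exists_mem_ball_diff_ball_two_pow {x₀ z : E} {r : ℝ} (hr : 0 < r)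
    (hz : 2 * r ≤ dist z x₀) :
    ∃ ℓ : ℕ, z ∈ ball x₀ (2 ^ (ℓ + 2) * r) \ ball x₀ (2 ^ (ℓ + 1) * r) := by
  obtain ⟨ℓ, hlo, hhi⟩ := exists_nat_pow_near ((one_le_div (by positivity)).2 hz)
    one_lt_two
  rw [le_div_iff₀ (by positivity)] at hlo
  rw [div_lt_iff₀ (by positivity)] at hhi
  refine ⟨ℓ, mem_ball.2 ?_, fun h => (mem_ball.1 h).not_ge ?_⟩
  · linarith [show (2 : ℝ) ^ (ℓ + 2) * r = 2 ^ (ℓ + 1) * (2 * r) by ring]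
  · linarith [show (2 : ℝ) ^ (ℓ + 1) * r = 2 ^ ℓ * (2 * r) by ring]

variable [MeasurableSpace E] [OpensMeasurableSpace E]

theorem setLIntegral_closedBall_le_tsum_annulus (μ : Measure E) {g : E → ℝ≥0∞} {x₀ y : E}
    {r t : ℝ} (hr : 0 < r) (hg : ∀ z ∈ ball x₀ (2 * r), g z = 0) (hy : dist y x₀ < t + r) :
    ∫⁻ z in closedBall y t, g z ∂μ ≤ ∑' ℓ : ℕ, (Set.Ioi (2 ^ (ℓ + 2) * r / 8)).indicator
      (fun _ => ∫⁻ z in ball x₀ (2 ^ (ℓ + 2) * r) \ ball x₀ (2 ^ (ℓ + 1) * r), g z ∂μ) t := by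
  set A : ℕ → Set E := fun ℓ => ball x₀ (2 ^ (ℓ + 2) * r) \ ball x₀ (2 ^ (ℓ + 1) * r)
  have hcover : closedBall y t ⊆ ball x₀ (2 * r) ∪ ⋃ ℓ, A ℓ ∩ ball x₀ (4 * t) := by
    intro z hz
    by_cases hnear : z ∈ ball x₀ (2 * r)
    · exact Or.inl hnear
    have hfar : 2 * r ≤ dist z x₀ := not_lt.1 hnear
    have hzt : dist z x₀ < 2 * t + r := by
      linarith [dist_triangle z y x₀, mem_closedBall.1 hz]
    obtain ⟨ℓ, hℓ⟩ := exists_mem_ball_diff_ball_two_pow hr hfar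
    exact Or.inr (Set.mem_iUnion.2 ⟨ℓ, hℓ, mem_ball.2 (by linarith)⟩)
  have hterm : ∀ ℓ, ∫⁻ z in A ℓ ∩ ball x₀ (4 * t), g z ∂μ
      ≤ (Set.Ioi (2 ^ (ℓ + 2) * r / 8)).indicator (fun _ => ∫⁻ z in A ℓ, g z ∂μ) t := by
    intro ℓ
    by_cases hℓ : t ∈ Set.Ioi (2 ^ (ℓ + 2) * r / 8)
    · rw [Set.indicator_of_mem hℓ]
      exact lintegral_mono_set Set.inter_subset_left
    · have hempty : A ℓ ∩ ball x₀ (4 * t) = ∅ := by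
        refine Set.eq_empty_of_forall_notMem fun z ⟨⟨_, hout⟩, hin⟩ => hℓ ?_
        have := not_lt.1 (mt mem_ball.2 hout)
        rw [Set.mem_Ioi, pow_succ]
        linarith [mem_ball.1 hin]
      simp [hempty]
  calc ∫⁻ z in closedBall y t, g z ∂μ
      ≤ ∫⁻ z in ball x₀ (2 * r) ∪ ⋃ ℓ, A ℓ ∩ ball x₀ (4 * t), g z ∂μ :=
        lintegral_mono_set hcover
    _ ≤ ∫⁻ z in ball x₀ (2 * r), g z ∂μ + ∫⁻ z in ⋃ ℓ, A ℓ ∩ ball x₀ (4 * t), g z ∂μ :=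
        lintegral_union_le _ _ _
    _ ≤ 0 + ∑' ℓ, ∫⁻ z in A ℓ ∩ ball x₀ (4 * t), g z ∂μ := by
        gcongr
        · exact ((setLIntegral_congr_fun measurableSet_ball hg).trans lintegral_zero).le
        · exact lintegral_iUnion_le _ _
    _ ≤ _ := by rw [zero_add]; exact ENNReal.tsum_le_tsum hterm

end annuli

theorem volume_ball_mul_sq_div_le {n : ℕ} (x : EuclideanSpace ℝ (Fin n)) (α t : ℝ)
    (c : ℝ≥0∞) :
    volume (ball x t) * ((ENNReal.ofReal (3 ^ α / t ^ n) * c) ^ 2 / ENNReal.ofReal (t ^ (n + 1)))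
      ≤ ENNReal.ofReal (3 ^ α) ^ 2 * volume (ball (0 : EuclideanSpace ℝ (Fin n)) 1)
          * (ENNReal.ofReal (t ^ (-(2 * n + 1 : ℝ))) * c ^ 2) := by
  rcases le_or_gt t 0 with ht | ht
  · simp [ball_eq_empty.2 ht]
  have hscale : ENNReal.ofReal (t ^ n) * (ENNReal.ofReal (3 ^ α / t ^ n) ^ 2
        * (ENNReal.ofReal (t ^ (n + 1)))⁻¹)
      = ENNReal.ofReal (3 ^ α) ^ 2 * ENNReal.ofReal (t ^ (-(2 * n + 1 : ℝ))) := by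
    rw [← ENNReal.ofReal_inv_of_pos (by positivity), ← ENNReal.ofReal_pow (by positivity),
      ← ENNReal.ofReal_pow (by positivity), ← ENNReal.ofReal_mul (by positivity),
      ← ENNReal.ofReal_mul (by positivity), ← ENNReal.ofReal_mul (by positivity),
      Real.rpow_neg ht.le, show (2 * n + 1 : ℝ) = ((2 * n + 1 : ℕ) : ℝ) by push_cast; ring,
      Real.rpow_natCast]
    congr 1
    field_simp
    ring
  rw [Measure.addHaar_ball_of_pos volume x ht, finrank_euclideanSpace_fin, div_eq_mul_inv,
    mul_pow]
  refine le_of_eq ?_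
  calc _ = ENNReal.ofReal (t ^ n) * (ENNReal.ofReal (3 ^ α / t ^ n) ^ 2
        * (ENNReal.ofReal (t ^ (n + 1)))⁻¹) * volume (ball (0 : EuclideanSpace ℝ (Fin n)) 1)
          * c ^ 2 := by ring
    _ = _ := by rw [hscale]; ring

theorem lintegral_intrinsicA_sq_le {n : ℕ} (α : ℝ) (f : EuclideanSpace ℝ (Fin n) → ℝ)
    (x : EuclideanSpace ℝ (Fin n)) {F : ℝ → ℝ≥0∞} (hF : Measurable F)
    (hA : ∀ y t, dist x y < t → intrinsicA n α f y t ≤ ENNReal.ofReal (3 ^ α / t ^ n) * F t) :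
    ∫⁻ p : EuclideanSpace ℝ (Fin n) × ℝ in {p | dist x p.1 < p.2},
        (intrinsicA n α f p.1 p.2) ^ 2 / ENNReal.ofReal (p.2 ^ (n + 1))
      ≤ ENNReal.ofReal (3 ^ α) ^ 2 * volume (ball (0 : EuclideanSpace ℝ (Fin n)) 1)
          * ∫⁻ t, F t ^ 2
              ∂volume.withDensity fun t => ENNReal.ofReal (t ^ (-(2 * n + 1 : ℝ))) := by
  have hw : Measurable fun t : ℝ => ENNReal.ofReal (t ^ (-(2 * n + 1 : ℝ))) := by fun_prop
  have hG : Measurable fun t : ℝ =>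
      (ENNReal.ofReal (3 ^ α / t ^ n) * F t) ^ 2 / ENNReal.ofReal (t ^ (n + 1)) := by
    fun_prop
  calc _ ≤ ∫⁻ p : EuclideanSpace ℝ (Fin n) × ℝ in {p | dist x p.1 < p.2},
        (ENNReal.ofReal (3 ^ α / p.2 ^ n) * F p.2) ^ 2 / ENNReal.ofReal (p.2 ^ (n + 1)) :=
        setLIntegral_mono (hG.comp measurable_snd) fun p hp => by gcongr; exact hA _ _ hp
    _ = ∫⁻ t, volume (ball x t)
          * ((ENNReal.ofReal (3 ^ α / t ^ n) * F t) ^ 2 / ENNReal.ofReal (t ^ (n + 1))) :=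
        setLIntegral_cone_eq x hG
    _ ≤ ∫⁻ t, ENNReal.ofReal (3 ^ α) ^ 2 * volume (ball (0 : EuclideanSpace ℝ (Fin n)) 1)
          * (ENNReal.ofReal (t ^ (-(2 * n + 1 : ℝ))) * F t ^ 2) :=
        lintegral_mono fun t => volume_ball_mul_sq_div_le x α t (F t)
    _ = _ := by
        rw [lintegral_const_mul _ (by fun_prop),
          lintegral_withDensity_eq_lintegral_mul _ hw (hF.pow_const 2), Pi.mul_def]

theorem intrinsicS_le_of_eq_zero_on_ball {n : ℕ} (hn : 1 ≤ n) (α : ℝ)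
    {x₀ x : EuclideanSpace ℝ (Fin n)} {rB : ℝ} (hrB : 0 < rB)
    {f : EuclideanSpace ℝ (Fin n) → ℝ} (hf : ∀ z ∈ ball x₀ (2 * rB), f z = 0)
    (hx : x ∈ ball x₀ rB) :
    intrinsicS n α f x
      ≤ (ENNReal.ofReal (3 ^ α) ^ 2 * volume (ball (0 : EuclideanSpace ℝ (Fin n)) 1))
            ^ (1 / 2 : ℝ)
          * (ENNReal.ofReal (8 ^ n) * volume (ball (0 : EuclideanSpace ℝ (Fin n)) 1))
          * ∑' ℓ : ℕ, (volume (ball x₀ (2 ^ (ℓ + 2) * rB)))⁻¹ *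
            ∫⁻ z in ball x₀ (2 ^ (ℓ + 2) * rB) \ ball x₀ (2 ^ (ℓ + 1) * rB),
              ENNReal.ofReal |f z| := by
  set v := volume (ball (0 : EuclideanSpace ℝ (Fin n)) 1)
  set a : ℕ → ℝ≥0∞ := fun ℓ =>
    ∫⁻ z in ball x₀ (2 ^ (ℓ + 2) * rB) \ ball x₀ (2 ^ (ℓ + 1) * rB), ENNReal.ofReal |f z|
  set τ : ℕ → ℝ := fun ℓ => 2 ^ (ℓ + 2) * rB / 8
  set F : ℝ → ℝ≥0∞ := fun t => ∑' ℓ, (Set.Ioi (τ ℓ)).indicator (fun _ => a ℓ) t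
  set ν := volume.withDensity fun t : ℝ => ENNReal.ofReal (t ^ (-(2 * n + 1 : ℝ)))
  have hA : ∀ y t, dist x y < t → intrinsicA n α f y t ≤ ENNReal.ofReal (3 ^ α / t ^ n) * F t := by
    intro y t hyt
    refine (intrinsicA_le hn f y (dist_nonneg.trans_lt hyt)).trans ?_
    gcongr
    refine setLIntegral_closedBall_le_tsum_annulus volume hrB (fun z hz => ?_) ?_
    · rw [hf z hz, abs_zero, ENNReal.ofReal_zero]
    · linarith [dist_triangle y x x₀, dist_comm x y, mem_ball.1 hx]
  have hF : Measurable F := Measurable.tsum fun ℓ => measurable_const.indicator measurableSet_Ioi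
  have hsum : ∫⁻ t, F t ^ 2 ∂ν ≤ (ENNReal.ofReal (8 ^ n) * v
      * ∑' ℓ, (volume (ball x₀ (2 ^ (ℓ + 2) * rB)))⁻¹ * a ℓ) ^ 2 := by
    refine (lintegral_sq_tsum_indicator_le ν (fun _ => measurableSet_Ioi) a).trans
      (pow_le_pow_left₀ zero_le ?_ 2)
    rw [← ENNReal.tsum_mul_left]
    refine ENNReal.tsum_le_tsum fun ℓ => ?_
    calc a ℓ * ν (Set.Ioi (τ ℓ)) ^ (1 / 2 : ℝ) ≤ a ℓ * (ENNReal.ofReal (τ ℓ ^ n))⁻¹ := by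
          gcongr; exact withDensity_Ioi_rpow_one_half_le hn (by positivity)
      _ = _ := by rw [inv_ofReal_div_eight_pow x₀ (by positivity)]; ring
  calc intrinsicS n α f x
      ≤ (ENNReal.ofReal (3 ^ α) ^ 2 * v * ∫⁻ t, F t ^ 2 ∂ν) ^ (1 / 2 : ℝ) :=
        ENNReal.rpow_le_rpow (lintegral_intrinsicA_sq_le α f x hF hA) (by norm_num)
    _ ≤ _ := by
        grw [hsum, ENNReal.mul_rpow_of_nonneg _ _ (by norm_num), sq_rpow_one_half]
        exact le_of_eq (by ring)

theorem stmt15_general {n : ℕ} (hn : 1 ≤ n) (α : ℝ) :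
    ∃ C > 0, ∀ (x₀ : EuclideanSpace ℝ (Fin n)) (rB : ℝ), 0 < rB →
      ∀ f : EuclideanSpace ℝ (Fin n) → ℝ, LocallyIntegrable f →
      (∀ x ∈ ball x₀ (2 * rB), f x = 0) → ∀ x ∈ ball x₀ rB,
        intrinsicS n α f x ≤ ENNReal.ofReal C * ∑' ℓ : ℕ,
          (volume (ball x₀ (2 ^ (ℓ + 2) * rB)))⁻¹ *
            ∫⁻ z in ball x₀ (2 ^ (ℓ + 2) * rB) \ ball x₀ (2 ^ (ℓ + 1) * rB),
              ENNReal.ofReal |f z| := by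
  set v := volume (ball (0 : EuclideanSpace ℝ (Fin n)) 1)
  have hv0 : v ≠ 0 := (measure_ball_pos _ _ one_pos).ne'
  have hvt : v ≠ ⊤ := measure_ball_lt_top.ne
  set K := (ENNReal.ofReal (3 ^ α) ^ 2 * v) ^ (1 / 2 : ℝ) * (ENNReal.ofReal (8 ^ n) * v)
  have hK0 : K ≠ 0 := by simp [K, hv0, Real.rpow_pos_of_pos]
  have hKt : K ≠ ⊤ := by finiteness
  refine ⟨K.toReal, ENNReal.toReal_pos hK0 hKt, fun x₀ rB hrB f _ hf x hx => ?_⟩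
  rw [ENNReal.ofReal_toReal hKt]
  exact intrinsicS_le_of_eq_zero_on_ball hn α hrB hf hx

theorem stmt15 {n : ℕ} (hn : 1 ≤ n) (α : ℝ) (hα0 : 0 < α) (hα1 : α ≤ 1) :
    ∃ C > 0, ∀ (x₀ : EuclideanSpace ℝ (Fin n)) (rB : ℝ), 0 < rB →
      ∀ f : EuclideanSpace ℝ (Fin n) → ℝ, LocallyIntegrable f →
      (∀ x ∈ ball x₀ (2 * rB), f x = 0) → ∀ x ∈ ball x₀ rB,
        intrinsicS n α f x ≤ ENNReal.ofReal C * ∑' ℓ : ℕ,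
          (volume (ball x₀ (2 ^ (ℓ + 2) * rB)))⁻¹ *
            ∫⁻ z in ball x₀ (2 ^ (ℓ + 2) * rB) \ ball x₀ (2 ^ (ℓ + 1) * rB),
              ENNReal.ofReal |f z| :=
  stmt15_general hn α
end
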